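/- arXiv:2504.09093 — 2 statements merged into one kernel-verified Lean document; each statement's English description precedes it below -/
import Mathlib

section
/- Let φ be holomorphic on ℂ∖ℝ and suppose there exist a finite complex Borel measure λ on ℝ and λ∞ ∈ ℂ with φ(w) = (φ(i)+φ(−i))/2 + λ∞·w + ∫_ℝ (1+s·w)/(s−w) dλ(s) for all w ∈ ℂ∖ℝ. Then for every x ∈ ℝ, lim_{y→0, y≠0} y·φ(x+iy) = i·(1+x²)·λ({x}) (a two-sided limit in real y), and lim_{y→+∞} φ(iy)/y = i·λ∞. -/
/-!
Since `(1 + s w) / (s - w) = w + (1 + w²) / (s - w)`, the representation reads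
`φ w = const + (λ∞ + λ(ℝ)) w + (1 + w²) C(w)` with `C` the Cauchy transform of `λ = g • μ`.
The kernels `y / (s - (x + i y))` are bounded by `1`; they tend to `i · 1_{s = x}` as `y → 0`
and to `i` as `y → +∞`. Dominated convergence therefore gives `y C(x + i y) → i λ({x})` and
`y C(i y) → i λ(ℝ)`, and both limits of the theorem follow by collecting terms.
-/

open MeasureTheory Filter Topology Complex

noncomputable def cauchyTransform (μ : Measure ℝ) (g : ℝ → ℂ) (w : ℂ) : ℂ :=
  ∫ s, g s / ((s : ℂ) - w) ∂μ

lemma abs_im_le_norm_ofReal_sub (s : ℝ) (w : ℂ) : |w.im| ≤ ‖(s : ℂ) - w‖ := by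
  simpa [abs_neg] using abs_im_le_norm ((s : ℂ) - w)

lemma ofReal_sub_ne_zero_of_im_ne_zero {w : ℂ} (hw : w.im ≠ 0) (s : ℝ) : (s : ℂ) - w ≠ 0 :=
  norm_pos_iff.mp ((abs_pos.mpr hw).trans_le (abs_im_le_norm_ofReal_sub s w))

lemma norm_im_div_ofReal_sub_le (s : ℝ) (w : ℂ) : ‖(w.im : ℂ) / ((s : ℂ) - w)‖ ≤ 1 := by
  rw [norm_div, norm_real, Real.norm_eq_abs]
  exact div_le_one_of_le₀ (abs_im_le_norm_ofReal_sub s w) (norm_nonneg _)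

lemma integrable_div_ofReal_sub {μ : Measure ℝ} {g : ℝ → ℂ} (hg : Integrable g μ) {w : ℂ}
    (hw : w.im ≠ 0) : Integrable (fun s : ℝ => g s / ((s : ℂ) - w)) μ := by
  refine hg.mul_bdd (c := |w.im|⁻¹) (by fun_prop) (ae_of_all _ fun s => ?_)
  rw [norm_inv]
  exact inv_anti₀ (abs_pos.mpr hw) (abs_im_le_norm_ofReal_sub s w)

lemma integral_kernel_mul_eq {μ : Measure ℝ} {g : ℝ → ℂ} (hg : Integrable g μ) {w : ℂ}
    (hw : w.im ≠ 0) :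
    ∫ s, ((1 + (s : ℂ) * w) / ((s : ℂ) - w)) * g s ∂μ
      = w * ∫ s, g s ∂μ + (1 + w ^ 2) * cauchyTransform μ g w := by
  have hsplit : ∀ s : ℝ, ((1 + (s : ℂ) * w) / ((s : ℂ) - w)) * g s
      = w * g s + (1 + w ^ 2) * (g s / ((s : ℂ) - w)) := fun s => by
    have hne := ofReal_sub_ne_zero_of_im_ne_zero hw s
    field_simp
    ring
  simp_rw [hsplit]
  rw [integral_add (hg.const_mul w) ((integrable_div_ofReal_sub hg hw).const_mul _),
    integral_const_mul, integral_const_mul, cauchyTransform]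

lemma tendsto_mul_cauchyTransform {μ : Measure ℝ} {g : ℝ → ℂ} (hg : Integrable g μ)
    {l : Filter ℝ} [l.IsCountablyGenerated] (x : ℝ) {k : ℝ → ℂ}
    (hk : ∀ s : ℝ, Tendsto (fun y : ℝ => (y : ℂ) / ((s : ℂ) - (x + y * I))) l (𝓝 (k s))) :
    Tendsto (fun y : ℝ => (y : ℂ) * cauchyTransform μ g (x + y * I)) l
      (𝓝 (∫ s, k s * g s ∂μ)) := by
  have hF : ∀ y : ℝ, (y : ℂ) * cauchyTransform μ g (x + y * I)
      = ∫ s, (y : ℂ) / ((s : ℂ) - (x + y * I)) * g s ∂μ := fun y => by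
    rw [cauchyTransform, ← integral_const_mul]
    congr 1 with s
    ring
  simp_rw [hF]
  refine tendsto_integral_filter_of_dominated_convergence (fun s => ‖g s‖)
    (Eventually.of_forall fun y =>
      (measurable_const.div (by fun_prop)).aestronglyMeasurable.mul hg.1)
    (Eventually.of_forall fun y => ae_of_all _ fun s => ?_) hg.norm
    (ae_of_all _ fun s => (hk s).mul_const _)
  rw [norm_mul]
  have him : ((x : ℂ) + y * I).im = y := by simp
  have hle := norm_im_div_ofReal_sub_le s (x + y * I)
  rw [him] at hle
  exact mul_le_of_le_one_left (norm_nonneg _) hle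

lemma tendsto_div_ofReal_sub_nhdsNE (x s : ℝ) :
    Tendsto (fun y : ℝ => (y : ℂ) / ((s : ℂ) - (x + y * I))) (𝓝[≠] 0)
      (𝓝 (({x} : Set ℝ).indicator (fun _ => I) s)) := by
  rcases eq_or_ne s x with rfl | hs
  · rw [Set.indicator_of_mem (Set.mem_singleton s)]
    refine tendsto_const_nhds.congr' (eventually_nhdsWithin_of_forall fun y (hy : y ≠ 0) => ?_)
    have hy' : (y : ℂ) ≠ 0 := ofReal_ne_zero.mpr hy
    field_simp
    linear_combination (-(y : ℂ)) * I_sq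
  · rw [Set.indicator_of_notMem (Set.notMem_singleton_iff.mpr hs)]
    have hsx : (s : ℂ) - (x + (0 : ℝ) * I) ≠ 0 := by
      simpa [sub_eq_zero] using hs
    have hcont : ContinuousAt (fun y : ℝ => (y : ℂ) / ((s : ℂ) - (x + y * I))) 0 :=
      (by fun_prop : ContinuousAt (fun y : ℝ => (y : ℂ)) 0).div (by fun_prop) hsx
    simpa using hcont.tendsto.mono_left nhdsWithin_le_nhds

lemma tendsto_div_ofReal_sub_atTop (x s : ℝ) :
    Tendsto (fun y : ℝ => (y : ℂ) / ((s : ℂ) - (x + y * I))) atTop (𝓝 I) := by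
  have hlim : Tendsto (fun y : ℝ => ((((s - x) / y : ℝ) : ℂ) - I)⁻¹) atTop (𝓝 ((0 - I)⁻¹)) := by
    refine ((continuous_ofReal.tendsto 0).comp ?_).sub_const I |>.inv₀ (by simp)
    exact tendsto_const_nhds.div_atTop tendsto_id
  rw [zero_sub, inv_neg, inv_I, neg_neg] at hlim
  refine hlim.congr' ((eventually_ne_atTop 0).mono fun y hy => ?_)
  have hy' : (y : ℂ) ≠ 0 := ofReal_ne_zero.mpr hy
  push_cast
  field_simp
  ring

lemma tendsto_mul_cauchyTransform_nhdsNE {μ : Measure ℝ} {g : ℝ → ℂ} (hg : Integrable g μ)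
    (x : ℝ) :
    Tendsto (fun y : ℝ => (y : ℂ) * cauchyTransform μ g (x + y * I)) (𝓝[≠] 0)
      (𝓝 (I * ∫ s in ({x} : Set ℝ), g s ∂μ)) := by
  have h := tendsto_mul_cauchyTransform hg x (tendsto_div_ofReal_sub_nhdsNE x)
  have hind : ∀ s, ({x} : Set ℝ).indicator (fun _ => I) s * g s
      = ({x} : Set ℝ).indicator (fun s => I * g s) s := fun s => by
    by_cases hs : s ∈ ({x} : Set ℝ) <;> simp [hs]
  simp_rw [hind] at h
  rwa [integral_indicator (measurableSet_singleton x), integral_const_mul] at h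

lemma tendsto_mul_cauchyTransform_atTop {μ : Measure ℝ} {g : ℝ → ℂ} (hg : Integrable g μ)
    (x : ℝ) :
    Tendsto (fun y : ℝ => (y : ℂ) * cauchyTransform μ g (x + y * I)) atTop
      (𝓝 (I * ∫ s, g s ∂μ)) := by
  simpa only [integral_const_mul] using
    tendsto_mul_cauchyTransform hg x (tendsto_div_ofReal_sub_atTop x)

def HasRepresentingMeasure (φ : ℂ → ℂ) (μ : Measure ℝ) (g : ℝ → ℂ) (lam : ℂ) : Prop :=
  ∀ w : ℂ, w.im ≠ 0 →
    φ w = (φ I + φ (-I)) / 2 + lam * w + ∫ s, ((1 + (s : ℂ) * w) / ((s : ℂ) - w)) * g s ∂μ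

section Representation

variable {φ : ℂ → ℂ} {μ : Measure ℝ} {g : ℝ → ℂ} {lam : ℂ}

lemma HasRepresentingMeasure.eq_add_cauchyTransform (hrep : HasRepresentingMeasure φ μ g lam)
    (hg : Integrable g μ) {w : ℂ} (hw : w.im ≠ 0) :
    φ w = (φ I + φ (-I)) / 2 + (lam + ∫ s, g s ∂μ) * w + (1 + w ^ 2) * cauchyTransform μ g w := by
  rw [hrep w hw, integral_kernel_mul_eq hg hw]
  ring

lemma HasRepresentingMeasure.tendsto_mul_apply_nhdsNE (hrep : HasRepresentingMeasure φ μ g lam)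
    (hg : Integrable g μ) (x : ℝ) :
    Tendsto (fun y : ℝ => (y : ℂ) * φ (x + y * I)) (𝓝[≠] 0)
      (𝓝 (I * (1 + (x : ℂ) ^ 2) * ∫ s in ({x} : Set ℝ), g s ∂μ)) := by
  set c := (φ I + φ (-I)) / 2
  set a := lam + ∫ s, g s ∂μ
  have hlin : Tendsto (fun y : ℝ => (y : ℂ) * c + a * ((y : ℂ) * (x + y * I))) (𝓝[≠] 0) (𝓝 0) :=
    ((by fun_prop : Continuous _).tendsto' 0 0 (by simp)).mono_left nhdsWithin_le_nhds
  have hquad : Tendsto (fun y : ℝ => 1 + ((x : ℂ) + y * I) ^ 2) (𝓝[≠] 0)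
      (𝓝 (1 + (x : ℂ) ^ 2)) :=
    ((by fun_prop : Continuous _).tendsto' 0 _ (by simp)).mono_left nhdsWithin_le_nhds
  have hlim := hlin.add (hquad.mul (tendsto_mul_cauchyTransform_nhdsNE hg x))
  rw [zero_add, ← mul_assoc, mul_comm (1 + (x : ℂ) ^ 2) I] at hlim
  refine hlim.congr' (eventually_nhdsWithin_of_forall fun y (hy : y ≠ 0) => ?_)
  dsimp only
  rw [hrep.eq_add_cauchyTransform hg (by simpa using hy)]
  ring

lemma HasRepresentingMeasure.tendsto_apply_div_atTop (hrep : HasRepresentingMeasure φ μ g lam)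
    (hg : Integrable g μ) :
    Tendsto (fun y : ℝ => φ (I * y) / y) atTop (𝓝 (I * lam)) := by
  set c := (φ I + φ (-I)) / 2
  set G := ∫ s, g s ∂μ
  have hinv : Tendsto (fun y : ℝ => (y : ℂ)⁻¹) atTop (𝓝 0) := by
    simpa only [ofReal_inv, ofReal_zero] using tendsto_inv_atTop_zero.ofReal
  have hlim := ((hinv.const_mul c).add_const ((lam + G) * I)).add
    (((hinv.pow 2).sub_const 1).mul (tendsto_mul_cauchyTransform_atTop hg 0))
  rw [show c * 0 + (lam + G) * I + (0 ^ 2 - 1) * (I * G) = I * lam by ring] at hlim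
  refine hlim.congr' ((eventually_ne_atTop 0).mono fun y hy => ?_)
  have hy' : (y : ℂ) ≠ 0 := ofReal_ne_zero.mpr hy
  dsimp only
  rw [ofReal_zero, zero_add, mul_comm (y : ℂ) I,
    hrep.eq_add_cauchyTransform hg (by simpa using hy)]
  simp only [c, G]
  field_simp
  linear_combination (-2 * (y : ℂ) ^ 2 * cauchyTransform μ g (I * y)) * I_sq

end Representation

theorem stmt14_general (φ : ℂ → ℂ)
    (μ : Measure ℝ) (g : ℝ → ℂ) (hg : Integrable g μ) (lam : ℂ)
    (hrep : ∀ w : ℂ, w.im ≠ 0 →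
      φ w = (φ Complex.I + φ (-Complex.I)) / 2 + lam * w
        + ∫ s, ((1 + (s : ℂ) * w) / ((s : ℂ) - w)) * g s ∂μ) :
    (∀ x : ℝ,
      Tendsto (fun y : ℝ => (y : ℂ) * φ ((x : ℂ) + (y : ℂ) * Complex.I))
        (𝓝[≠] (0 : ℝ))
        (𝓝 (Complex.I * (1 + (x : ℂ) ^ 2) * ∫ s in ({x} : Set ℝ), g s ∂μ)))
    ∧
    Tendsto (fun y : ℝ => φ (Complex.I * (y : ℂ)) / (y : ℂ)) atTop
      (𝓝 (Complex.I * lam)) :=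
  ⟨HasRepresentingMeasure.tendsto_mul_apply_nhdsNE hrep hg,
    HasRepresentingMeasure.tendsto_apply_div_atTop hrep hg⟩

/-- **Atomic masses from boundary limits** (Lemma `mass`).
If `φ` admits the representing measure encoded by `(μ, g)` with atomic mass `lam` at `∞`,
then `y·φ(x+iy) → i(1+x²)·λ({x})` as real `y → 0`, `y ≠ 0`, and `φ(iy)/y → i·λ∞` as
`y → +∞`; the atomic mass of the complex measure at `x` is `∫_{x} g dμ`. -/
theorem stmt14 (φ : ℂ → ℂ) (hφ : DifferentiableOn ℂ φ {z : ℂ | z.im ≠ 0})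
    (μ : Measure ℝ) [IsFiniteMeasure μ] (g : ℝ → ℂ) (hg : Integrable g μ) (lam : ℂ)
    (hrep : ∀ w : ℂ, w.im ≠ 0 →
      φ w = (φ Complex.I + φ (-Complex.I)) / 2 + lam * w
        + ∫ s, ((1 + (s : ℂ) * w) / ((s : ℂ) - w)) * g s ∂μ) :
    (∀ x : ℝ,
      Tendsto (fun y : ℝ => (y : ℂ) * φ ((x : ℂ) + (y : ℂ) * Complex.I))
        (𝓝[≠] (0 : ℝ))
        (𝓝 (Complex.I * (1 + (x : ℂ) ^ 2) * ∫ s in ({x} : Set ℝ), g s ∂μ)))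
    ∧
    Tendsto (fun y : ℝ => φ (Complex.I * (y : ℂ)) / (y : ℂ)) atTop
      (𝓝 (Complex.I * lam)) :=
  stmt14_general φ μ g hg lam hrep
end

section
/- For every z ∈ ℂ not in (π/2)·ℤ, the series Σ_{n∈ℤ} ((−1)^{n+1}/(1+(πn/2)²)) · (1+πnz/2)/(πn/2 − z) converges absolutely and its sum equals 2/sin(2z). -/
/-!
Write `t = πn/2`. The summand is `(-1)^(n+1) (1 + t z)/((1 + t²)(t - z)) = O(1/t²)`, whence absolute
convergence. Since `(1 + t z)/((1 + t²)(t - z)) = 1/(t - z) - t/(1 + t²)`, pairing `n` with `-n`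
cancels the odd parts `t/(1 + t²)` and leaves `(-1)^n (1/(z - t) + 1/(z + t))`: this is the
Mittag-Leffler series of `π / sin (π x)` at `x = 2z/π`, which follows from the series of
`π cot (π x)` by splitting it into even and odd terms, since `1 / sin θ = cot (θ/2) - cot θ`.
-/

open Filter Complex Real

namespace Complex

lemma cot_half_sub_cot {θ : ℂ} (h : sin θ ≠ 0) : cot (θ / 2) - cot θ = 1 / sin θ := by
  obtain ⟨u, rfl⟩ : ∃ u, θ = 2 * u := ⟨θ / 2, by ring⟩
  rw [sin_two_mul] at h
  have hs : sin u ≠ 0 := right_ne_zero_of_mul (left_ne_zero_of_mul h)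
  have hc : cos u ≠ 0 := right_ne_zero_of_mul h
  rw [mul_div_cancel_left₀ u two_ne_zero, cot_eq_cos_div_sin, cot_eq_cos_div_sin, sin_two_mul,
    cos_two_mul]
  field_simp
  ring

lemma div_two_mem_integerComplement {x : ℂ} (hx : x ∈ integerComplement) :
    x / 2 ∈ integerComplement := by
  rintro ⟨m, hm⟩
  exact hx ⟨2 * m, by push_cast; rw [hm]; ring⟩

end Complex

lemma hasSum_cotTerm {x : ℂ} (hx : x ∈ integerComplement) :
    HasSum (cotTerm x) (π * cot (π * x) - 1 / x) :=
  (summable_cotTerm hx).hasSum_iff_tendsto_nat.mpr (tendsto_logDeriv_euler_cot_sub hx)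

lemma cotTerm_div_two (x : ℂ) (k : ℕ) : cotTerm (x / 2) k = 2 * cotTerm x (2 * k + 1) := by
  have h₁ : x / 2 - (k + 1) = (x - ((2 * k + 1 : ℕ) + 1)) / 2 := by push_cast; ring
  have h₂ : x / 2 + (k + 1) = (x + ((2 * k + 1 : ℕ) + 1)) / 2 := by push_cast; ring
  simp only [cotTerm, h₁, h₂, one_div_div]
  ring

theorem hasSum_neg_one_pow_mul_cotTerm {x : ℂ} (hx : x ∈ integerComplement) :
    HasSum (fun k : ℕ => (-1) ^ (k + 1) * cotTerm x k) (π / sin (π * x) - 1 / x) := by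
  have hodd : HasSum (fun k => cotTerm x (2 * k + 1))
      ((π * cot (π * (x / 2)) - 1 / (x / 2)) / 2) := by
    have := (hasSum_cotTerm (div_two_mem_integerComplement hx)).div_const 2
    simpa only [cotTerm_div_two, mul_div_cancel_left₀ _ (two_ne_zero' ℂ)] using this
  obtain ⟨E, heven⟩ : Summable fun k => cotTerm x (2 * k) :=
    (summable_cotTerm hx).comp_injective (mul_right_injective₀ two_ne_zero)
  have hE : E + (π * cot (π * (x / 2)) - 1 / (x / 2)) / 2 = π * cot (π * x) - 1 / x :=
    (heven.even_add_odd hodd).unique (hasSum_cotTerm hx)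
  have halt := HasSum.even_add_odd (f := fun k : ℕ => (-1) ^ (k + 1) * cotTerm x k)
    (by simpa [pow_succ, pow_mul] using heven.neg) (by simpa [pow_succ, pow_mul] using hodd)
  convert halt using 1
  have hcot := cot_half_sub_cot (sin_pi_mul_ne_zero hx)
  rw [mul_div_assoc] at hcot
  have hx0 := integerComplement.ne_zero hx
  linear_combination (norm := (field_simp; ring)) hE - π * hcot

noncomputable def nevanlinnaKernel (z t : ℂ) : ℂ := (1 + t * z) / (t - z)

lemma nevanlinnaKernel_div_add_neg {z t : ℂ} (ht : 1 + t ^ 2 ≠ 0) (h₁ : t - z ≠ 0)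
    (h₂ : t + z ≠ 0) :
    nevanlinnaKernel z t / (1 + t ^ 2) + nevanlinnaKernel z (-t) / (1 + (-t) ^ 2) =
      1 / (t - z) - 1 / (t + z) := by
  have h₃ : -t - z ≠ 0 := by rw [← neg_add']; exact neg_ne_zero.mpr h₂
  simp only [nevanlinnaKernel]
  field_simp
  ring

lemma norm_nevanlinnaKernel_div_le (z : ℂ) {t : ℝ} (h₁ : 1 ≤ |t|) (h₂ : 2 * ‖z‖ ≤ |t|) :
    ‖nevanlinnaKernel z t / (1 + (t : ℂ) ^ 2)‖ ≤ 2 * (1 + ‖z‖) / t ^ 2 := by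
  have hnum : ‖1 + t * z‖ ≤ |t| * (1 + ‖z‖) := by
    calc ‖1 + t * z‖ ≤ 1 + |t| * ‖z‖ := by simpa using norm_add_le (1 : ℂ) (t * z)
      _ ≤ |t| * (1 + ‖z‖) := by nlinarith [norm_nonneg z]
  have hden : |t| / 2 * t ^ 2 ≤ ‖(t : ℂ) - z‖ * ‖1 + (t : ℂ) ^ 2‖ := by
    have hsub : |t| / 2 ≤ ‖(t : ℂ) - z‖ := by
      have := norm_sub_norm_le (t : ℂ) z
      rw [norm_real, Real.norm_eq_abs] at this
      linarith
    have hsq : t ^ 2 ≤ ‖1 + (t : ℂ) ^ 2‖ := by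
      rw [← ofReal_one, ← ofReal_pow, ← ofReal_add, norm_real, Real.norm_eq_abs]
      exact (le_abs_self _).trans' (by linarith)
    exact mul_le_mul hsub hsq (by positivity) (by positivity)
  have ht : 0 < |t| := by linarith
  have ht2 : 0 < t ^ 2 := by rw [← sq_abs]; exact pow_pos ht 2
  calc ‖nevanlinnaKernel z t / (1 + (t : ℂ) ^ 2)‖
      = ‖1 + t * z‖ / (‖(t : ℂ) - z‖ * ‖1 + (t : ℂ) ^ 2‖) := by
        rw [nevanlinnaKernel, norm_div, norm_div, div_div]
    _ ≤ |t| * (1 + ‖z‖) / (|t| / 2 * t ^ 2) :=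
        div_le_div₀ (by positivity) hnum (by positivity) hden
    _ = 2 * (1 + ‖z‖) / t ^ 2 := by field_simp

/-- The contribution of the atom of mass `(-1)^(n+1) / (1 + t²)` at `t = c n` to
`∫ (1 + t z)/(t - z) dμ(t)`. -/
noncomputable def nevanlinnaTerm (c : ℝ) (z : ℂ) (n : ℤ) : ℂ :=
  (-1) ^ (n + 1) * (nevanlinnaKernel z (c * n : ℝ) / (1 + ((c * n : ℝ) : ℂ) ^ 2))

lemma summable_norm_nevanlinnaTerm (z : ℂ) {c : ℝ} (hc : c ≠ 0) :
    Summable fun n : ℤ => ‖nevanlinnaTerm c z n‖ := by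
  have hdom : Summable fun n : ℤ => 2 * (1 + ‖z‖) / (c * n) ^ 2 := by
    refine ((Real.summable_one_div_int_pow.mpr one_lt_two).mul_left
      (2 * (1 + ‖z‖) / c ^ 2)).congr fun n => ?_
    ring
  refine .of_norm_bounded_eventually hdom ?_
  have hlarge : ∀ᶠ n : ℤ in cofinite, max 1 (2 * ‖z‖) ≤ |c * n| := by
    have := (tendsto_norm_cocompact_atTop.comp Int.tendsto_coe_cofinite).eventually_ge_atTop
      (max 1 (2 * ‖z‖) / |c|)
    filter_upwards [this] with n hn
    rw [abs_mul, ← div_le_iff₀' (abs_pos.mpr hc)]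
    exact hn
  filter_upwards [hlarge] with n hn
  rw [norm_norm, nevanlinnaTerm, norm_mul, norm_zpow, norm_neg, norm_one, one_zpow, one_mul]
  exact norm_nevanlinnaKernel_div_le z ((le_max_left _ _).trans hn) ((le_max_right _ _).trans hn)

lemma nevanlinnaTerm_add_nevanlinnaTerm_neg {c : ℝ} (hc : c ≠ 0) {x : ℂ}
    (hx : x ∈ integerComplement) (k : ℕ) :
    nevanlinnaTerm c (c * x) (k + 1) + nevanlinnaTerm c (c * x) (-(k + 1)) =
      1 / c * ((-1) ^ (k + 1) * cotTerm x k) := by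
  have hx₁ : (k + 1 : ℂ) - x ≠ 0 := by
    rw [← neg_ne_zero, neg_sub]
    simpa [sub_eq_add_neg, add_comm] using integerComplement_add_ne_zero hx (-(k + 1))
  have hx₂ : x + (k + 1) ≠ 0 := by simpa using integerComplement_add_ne_zero hx (k + 1)
  have hc' : (c : ℂ) ≠ 0 := ofReal_ne_zero.mpr hc
  have ht : 1 + (c * (k + 1) : ℂ) ^ 2 ≠ 0 := by
    exact_mod_cast (by positivity : (0 : ℝ) < 1 + (c * (k + 1)) ^ 2).ne'
  have h₁ : c * (k + 1) - c * x ≠ 0 := by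
    rw [← mul_sub]; exact mul_ne_zero hc' hx₁
  have h₂ : c * (k + 1) + c * x ≠ 0 := by
    rw [← mul_add]; exact mul_ne_zero hc' (by rwa [add_comm])
  have hpos : (-1 : ℂ) ^ ((k : ℤ) + 1 + 1) = (-1) ^ k := by
    rw [show (k : ℤ) + 1 + 1 = (k + 2 : ℕ) by push_cast; ring, zpow_natCast, pow_add]
    norm_num
  have hneg : (-1 : ℂ) ^ (-((k : ℤ) + 1) + 1) = (-1) ^ k := by
    rw [show -((k : ℤ) + 1) + 1 = -(k : ℤ) by ring, zpow_neg, zpow_natCast, ← inv_pow]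
    norm_num
  unfold nevanlinnaTerm
  push_cast
  rw [hpos, hneg, mul_neg, ← mul_add, nevanlinnaKernel_div_add_neg ht h₁ h₂, ← mul_sub, ← mul_add,
    ← one_div_mul_one_div, ← one_div_mul_one_div, cotTerm,
    show x - (k + 1) = -((k + 1) - x) by ring, one_div_neg_eq_neg_one_div]
  ring

theorem hasSum_nevanlinnaTerm {c : ℝ} (hc : c ≠ 0) {x : ℂ} (hx : x ∈ integerComplement) :
    HasSum (nevanlinnaTerm c (c * x)) (π / (c * sin (π * x))) := by
  obtain ⟨L, hL⟩ : Summable (nevanlinnaTerm c (c * x)) :=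
    (summable_norm_nevanlinnaTerm (c * x) hc).of_norm
  have hpairs := (hasSum_nat_add_iff' 1).mpr hL.nat_add_neg
  simp only [Finset.sum_range_one, Nat.cast_add, Nat.cast_one, Nat.cast_zero, neg_zero,
    nevanlinnaTerm_add_nevanlinnaTerm_neg hc hx] at hpairs
  have h0 : nevanlinnaTerm c (c * x) 0 = 1 / (c * x) := by simp [nevanlinnaTerm, nevanlinnaKernel]
  have hpaired := hpairs.unique ((hasSum_neg_one_pow_mul_cotTerm hx).mul_left (1 / c : ℂ))
  rw [h0] at hpaired
  convert hL using 1
  linear_combination -hpaired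

/-- **The expansion of `2/sin(2z)`**: for `z` avoiding the multiples of `π/2`, the series
`Σ_{n∈ℤ} ((−1)^{n+1}/(1+(πn/2)²))·(1+πnz/2)/(πn/2−z)` converges absolutely to
`2/sin(2z)`. -/
theorem stmt18 (z : ℂ) (hz : ∀ n : ℤ, z ≠ (Real.pi : ℂ) * (n : ℂ) / 2) :
    Summable (fun n : ℤ =>
      ‖((-1 : ℂ) ^ (n + 1) / (1 + ((Real.pi : ℂ) * (n : ℂ) / 2) ^ 2)) *
        ((1 + (Real.pi : ℂ) * (n : ℂ) * z / 2) / ((Real.pi : ℂ) * (n : ℂ) / 2 - z))‖)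
    ∧ HasSum (fun n : ℤ =>
        ((-1 : ℂ) ^ (n + 1) / (1 + ((Real.pi : ℂ) * (n : ℂ) / 2) ^ 2)) *
          ((1 + (Real.pi : ℂ) * (n : ℂ) * z / 2) / ((Real.pi : ℂ) * (n : ℂ) / 2 - z)))
        (2 / Complex.sin (2 * z)) := by
  have hπ : (π : ℂ) ≠ 0 := ofReal_ne_zero.mpr pi_ne_zero
  have hc : π / 2 ≠ 0 := by positivity
  have hzx : ((π / 2 : ℝ) : ℂ) * (2 * z / π) = z := by push_cast; field_simp
  have hx : 2 * z / π ∈ integerComplement := by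
    rintro ⟨n, hn⟩
    exact hz n (by rw [← hzx, ← hn]; push_cast; ring)
  have hterm : ∀ n : ℤ, ((-1 : ℂ) ^ (n + 1) / (1 + ((π : ℂ) * n / 2) ^ 2)) *
      ((1 + (π : ℂ) * n * z / 2) / ((π : ℂ) * n / 2 - z)) = nevanlinnaTerm (π / 2) z n := by
    intro n
    simp only [nevanlinnaTerm, nevanlinnaKernel]
    push_cast
    ring
  simp only [hterm]
  refine ⟨summable_norm_nevanlinnaTerm z hc, ?_⟩
  have hsum := hasSum_nevanlinnaTerm hc hx
  rw [hzx] at hsum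
  convert hsum using 1
  rw [show (π : ℂ) * (2 * z / π) = 2 * z by field_simp]
  push_cast
  field_simp
end
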